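/- Let s₄ ≈ 1.907 be the unique root in the interval (1,2) of s⁴ − 2s³ + 2s² − 4s + 1 = 0. Fix a real s with s₄ ≤ s ≤ 2 and consider the instance of the favorite-machine scheduling game on two machines with parameter s consisting of four jobs (of nonnegative size): A of size 1/2 with favorite machine 2; B of size 1/2 with favorite machine 1; C of size 1/2 with favorite machine 1; and E of size (2 − s)/2 with favorite machine 2. Then the allocation assigning A and C to machine 1 and B and E to machine 2 is a strong equilibrium whose makespan equals (s + 1)/2, while the optimal makespan of this instance is at most 1. Consequently, the strong price of anarchy at parameter s is at least (s + 1)/2. -/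

import Mathlib

open Finset

/-- Processing time of job `j` on machine `i` in the favorite-machine model:
`q j` on the favorite machine `f j` and `s * q j` on the other machine. -/
noncomputable def ptime (s : ℝ) {n : ℕ} (q : Fin n → ℝ) (f : Fin n → Fin 2)
    (i : Fin 2) (j : Fin n) : ℝ :=
  if f j = i then q j else s * q j

/-- Load of machine `i` under allocation `x`. -/
noncomputable def load (s : ℝ) {n : ℕ} (q : Fin n → ℝ) (f : Fin n → Fin 2)
    (x : Fin n → Fin 2) (i : Fin 2) : ℝ :=
  ∑ j ∈ Finset.univ.filter (fun j => x j = i), ptime s q f i j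

/-- Makespan (maximum load) of allocation `x`. -/
noncomputable def makespan (s : ℝ) {n : ℕ} (q : Fin n → ℝ) (f : Fin n → Fin 2)
    (x : Fin n → Fin 2) : ℝ :=
  max (load s q f x 0) (load s q f x 1)

/-- The optimal (minimum) makespan over all allocations. -/
noncomputable def optMakespan (s : ℝ) {n : ℕ} (q : Fin n → ℝ) (f : Fin n → Fin 2) : ℝ :=
  ⨅ y : Fin n → Fin 2, makespan s q f y

/-- Pure Nash equilibrium: no job can move to the other machine and find there
a load smaller than its current cost. -/
def IsNE (s : ℝ) {n : ℕ} (q : Fin n → ℝ) (f : Fin n → Fin 2)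
    (x : Fin n → Fin 2) : Prop :=
  ∀ j : Fin n, ∀ i : Fin 2, i ≠ x j →
    load s q f x (x j) ≤ load s q f (Function.update x j i) i

/-- Strong equilibrium: for every deviation `y` differing from `x` on a nonempty
set of jobs, some deviating job does not improve its cost. -/
def IsSE (s : ℝ) {n : ℕ} (q : Fin n → ℝ) (f : Fin n → Fin 2)
    (x : Fin n → Fin 2) : Prop :=
  ∀ y : Fin n → Fin 2, (∃ j, y j ≠ x j) →
    ∃ j, y j ≠ x j ∧ load s q f x (x j) ≤ load s q f y (y j)


/-!
Jobs `0, 1, 2, 3` are `A, B, C, E`. The allocation puts `A`, `C` on machine `0` (load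
`(s + 1)/2`) and `B`, `E` on machine `1` (load `1`). A deviating coalition fails because some
member always lands on a machine that already holds a partner job: if `B` moves to machine `0`
it meets `A` or `C` there, unless both of them moved to machine `1`, where `A` then meets `C`;
if `B` stays, then `A` or `C` moving to machine `1` meets `B`, and `E` moving alone meets `A`.
Each such pair of jobs weighs at least the deviator's old cost when `1 ≤ s ≤ 2`. Putting every
job on its favourite machine gives makespan `1`.
-/

section General

variable {s : ℝ} {n : ℕ} {q : Fin n → ℝ} {f : Fin n → Fin 2}

lemma ptime_nonneg (hs : 0 ≤ s) (hq : ∀ j, 0 ≤ q j) (i : Fin 2) (j : Fin n) :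
    0 ≤ ptime s q f i j := by
  unfold ptime
  split_ifs
  exacts [hq j, mul_nonneg hs (hq j)]

lemma load_nonneg (hs : 0 ≤ s) (hq : ∀ j, 0 ≤ q j) (x : Fin n → Fin 2) (i : Fin 2) :
    0 ≤ load s q f x i :=
  Finset.sum_nonneg fun j _ => ptime_nonneg hs hq i j

lemma ptime_add_ptime_le_load (hs : 0 ≤ s) (hq : ∀ j, 0 ≤ q j) {x : Fin n → Fin 2}
    {i : Fin 2} {j k : Fin n} (hjk : j ≠ k) (hj : x j = i) (hk : x k = i) :
    ptime s q f i j + ptime s q f i k ≤ load s q f x i := by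
  rw [← Finset.sum_pair hjk]
  refine Finset.sum_le_sum_of_subset_of_nonneg ?_ fun l _ _ => ptime_nonneg hs hq i l
  simp [Finset.insert_subset_iff, hj, hk]

lemma optMakespan_le_makespan (hs : 0 ≤ s) (hq : ∀ j, 0 ≤ q j) (y : Fin n → Fin 2) :
    optMakespan s q f ≤ makespan s q f y := by
  refine ciInf_le ⟨0, ?_⟩ y
  rintro _ ⟨z, rfl⟩
  exact (load_nonneg hs hq z 0).trans (le_max_left _ _)

end General

section Instance

variable {s : ℝ}

noncomputable def jobSizes (s : ℝ) : Fin 4 → ℝ := ![1/2, 1/2, 1/2, (2 - s)/2]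

def favMachines : Fin 4 → Fin 2 := ![1, 0, 0, 1]

def equilibriumAlloc : Fin 4 → Fin 2 := ![0, 1, 0, 1]

lemma jobSizes_nonneg (hs : s ≤ 2) (j : Fin 4) : 0 ≤ jobSizes s j := by
  fin_cases j <;> norm_num [jobSizes]
  linarith

lemma load_eq_sum_fin_four (q : Fin 4 → ℝ) (f x : Fin 4 → Fin 2) (i : Fin 2) :
    load s q f x i = ∑ j : Fin 4, if x j = i then ptime s q f i j else 0 := by
  rw [load, Finset.sum_filter]

lemma load_equilibriumAlloc_zero :
    load s (jobSizes s) favMachines equilibriumAlloc 0 = (s + 1)/2 := by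
  simp [load_eq_sum_fin_four, Fin.sum_univ_four, equilibriumAlloc, jobSizes, favMachines, ptime]
  ring

lemma load_equilibriumAlloc_one :
    load s (jobSizes s) favMachines equilibriumAlloc 1 = 1 := by
  simp [load_eq_sum_fin_four, Fin.sum_univ_four, equilibriumAlloc, jobSizes, favMachines, ptime]
  ring

lemma makespan_equilibriumAlloc (hs : 1 ≤ s) :
    makespan s (jobSizes s) favMachines equilibriumAlloc = (s + 1)/2 := by
  rw [makespan, load_equilibriumAlloc_zero, load_equilibriumAlloc_one]
  exact max_eq_left (by linarith)

lemma makespan_favMachines_le_one (hs : 1 ≤ s) :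
    makespan s (jobSizes s) favMachines favMachines ≤ 1 := by
  simp only [makespan, load_eq_sum_fin_four, Fin.sum_univ_four]
  simp [jobSizes, favMachines, ptime]
  constructor <;> linarith

lemma isSE_equilibriumAlloc (hs : 1 ≤ s) (hs' : s ≤ 2) :
    IsSE s (jobSizes s) favMachines equilibriumAlloc := by
  intro y ⟨d, hd⟩
  have hx₀ := load_equilibriumAlloc_zero (s := s)
  have hx₁ := load_equilibriumAlloc_one (s := s)
  set P := ptime s (jobSizes s) favMachines
  set L := load s (jobSizes s) favMachines
  have pair : ∀ {c : ℝ} {i : Fin 2} {j k : Fin 4},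
      c ≤ P i j + P i k → j ≠ k → y j = i → y k = i → c ≤ L y i :=
    fun hc hjk hj hk =>
      hc.trans (ptime_add_ptime_le_load (by linarith) (jobSizes_nonneg hs') hjk hj hk)
  have blocked_leaving_zero : ∀ j, equilibriumAlloc j = 0 → y j = 1 → (s + 1)/2 ≤ L y 1 →
      ∃ j, y j ≠ equilibriumAlloc j ∧ L equilibriumAlloc (equilibriumAlloc j) ≤ L y (y j) :=
    fun j hj hyj h => ⟨j, by rw [hj, hyj]; decide, by rwa [hj, hyj, hx₀]⟩
  have blocked_leaving_one : ∀ j, equilibriumAlloc j = 1 → y j = 0 → 1 ≤ L y 0 →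
      ∃ j, y j ≠ equilibriumAlloc j ∧ L equilibriumAlloc (equilibriumAlloc j) ≤ L y (y j) :=
    fun j hj hyj h => ⟨j, by rw [hj, hyj]; decide, by rwa [hj, hyj, hx₁]⟩
  have hP : P 0 0 = s/2 ∧ P 0 1 = 1/2 ∧ P 0 2 = 1/2 ∧ P 0 3 = s * ((2 - s)/2) ∧
      P 1 0 = 1/2 ∧ P 1 1 = s/2 ∧ P 1 2 = s/2 := by
    simp [P, ptime, jobSizes, favMachines]
    ring_nf
  obtain ⟨hP00, hP01, hP02, hP03, hP10, hP11, hP12⟩ := hP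
  by_cases hB : y 1 = 0
  · by_cases hA : y 0 = 0
    · exact blocked_leaving_one 1 rfl hB (pair (by linarith) (by decide) hA hB)
    by_cases hC : y 2 = 0
    · exact blocked_leaving_one 1 rfl hB (pair (by linarith) (by decide) hB hC)
    · exact blocked_leaving_zero 0 rfl (by omega)
        (pair (j := 0) (k := 2) (by linarith) (by decide) (by omega) (by omega))
  · by_cases hA : y 0 = 1
    · exact blocked_leaving_zero 0 rfl hA (pair (k := 1) (by linarith) (by decide) hA (by omega))
    by_cases hC : y 2 = 1
    · exact blocked_leaving_zero 2 rfl hC (pair (j := 1) (by linarith) (by decide) (by omega) hC)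
    have hE : y 3 = 0 := by
      fin_cases d <;> simp_all [equilibriumAlloc] <;> omega
    exact blocked_leaving_one 3 rfl hE
      (pair (j := 0) (by nlinarith [mul_nonneg (sub_nonneg.2 hs) (sub_nonneg.2 hs')])
        (by decide) (by omega) hE)

end Instance

theorem spoa_lower_interval5_general
    (s₄ : ℝ) (hs₄lo : 1 < s₄)
    (s : ℝ) (hs : s₄ ≤ s) (hs' : s ≤ 2)
    (q : Fin 4 → ℝ) (hq : q = ![1/2, 1/2, 1/2, (2 - s)/2])
    (f : Fin 4 → Fin 2) (hf : f = ![1, 0, 0, 1])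
    (x : Fin 4 → Fin 2) (hx : x = ![0, 1, 0, 1]) :
    IsSE s q f x ∧
      makespan s q f x = (s + 1)/2 ∧
      optMakespan s q f ≤ 1 ∧
      ((s + 1)/2) * optMakespan s q f ≤ makespan s q f x := by
  obtain rfl : q = jobSizes s := hq
  obtain rfl : f = favMachines := hf
  obtain rfl : x = equilibriumAlloc := hx
  have hs₁ : 1 ≤ s := by linarith
  have hopt : optMakespan s (jobSizes s) favMachines ≤ 1 :=
    (optMakespan_le_makespan (by linarith) (jobSizes_nonneg hs') favMachines).trans
      (makespan_favMachines_le_one hs₁)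
  have hmakespan := makespan_equilibriumAlloc hs₁
  refine ⟨isSE_equilibriumAlloc hs₁ hs', hmakespan, hopt, ?_⟩
  rw [hmakespan]
  exact mul_le_of_le_one_right (by linarith) hopt

theorem spoa_lower_interval5
    (s₄ : ℝ) (hs₄lo : 1 < s₄) (hs₄hi : s₄ < 2)
    (hs₄root : s₄^4 - 2*s₄^3 + 2*s₄^2 - 4*s₄ + 1 = 0)
    (s : ℝ) (hs : s₄ ≤ s) (hs' : s ≤ 2)
    (q : Fin 4 → ℝ) (hq : q = ![1/2, 1/2, 1/2, (2 - s)/2])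
    (f : Fin 4 → Fin 2) (hf : f = ![1, 0, 0, 1])
    (x : Fin 4 → Fin 2) (hx : x = ![0, 1, 0, 1]) :
    IsSE s q f x ∧
      makespan s q f x = (s + 1)/2 ∧
      optMakespan s q f ≤ 1 ∧
      ((s + 1)/2) * optMakespan s q f ≤ makespan s q f x :=
  spoa_lower_interval5_general s₄ hs₄lo s hs hs' q hq f hf x hx
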